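/- arXiv:math/0604281 — 3 statements merged into one kernel-verified Lean document; each statement's English description precedes it below -/
import Mathlib

section
/- Let m ∈ ℤ≥0, A₁ = { (r₁,r₂,r₃,r₄) ∈ ℤ≥0⁴ : r₄ ≤ r₂ and 2r₁ + 3r₂ + 3r₃ ≤ m }. Let j, k ∈ ℤ≥0 with 0 ≤ k ≤ ⌊m/3⌋ and 2k ≤ j ≤ m − k; write j − 2k = r₁ + 3r₄ with 0 ≤ r₁ ≤ 2 and r₄ = ⌊(j−2k)/3⌋. For 0 ≤ s ≤ k set r_{j,k,s} = (r₁, k + r₄ − s, s, r₄). Then the number of elements r' ∈ A₁ with r' ∼ r_{j,k,s} (i.e., r' − r_{j,k,s} ∈ ℤ·(3,−1,0,−1)) equals 1 + ⌊(j−2k)/3⌋ + min(0, ⌊(m + k − 2j)/3⌋), provided this quantity is positive. -/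
/-- `A₁ = { (r₁,r₂,r₃,r₄) ∈ ℤ≥0⁴ : r₄ ≤ r₂, 2r₁+3r₂+3r₃ ≤ m }`. -/
def A1 (m : ℤ) : Set (ℤ × ℤ × ℤ × ℤ) :=
  {r | 0 ≤ r.1 ∧ 0 ≤ r.2.1 ∧ 0 ≤ r.2.2.1 ∧ 0 ≤ r.2.2.2 ∧
       r.2.2.2 ≤ r.2.1 ∧ 2 * r.1 + 3 * r.2.1 + 3 * r.2.2.1 ≤ m}

/-- Cardinality of the equivalence class of `r_{j,k,s} = (r₁, k+r₄−s, s, r₄)`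
(modulo translation by `(3,−1,0,−1)`) inside `A₁`: it equals
`1 + ⌊(j−2k)/3⌋ + min(0, ⌊(m+k−2j)/3⌋)`, provided this quantity is positive.
Here `0 ≤ k ≤ ⌊m/3⌋`, `2k ≤ j ≤ m−k`, `0 ≤ s ≤ k` and `j−2k = r₁+3r₄` with
`0 ≤ r₁ ≤ 2` (so `r₄ = ⌊(j−2k)/3⌋`). -/
theorem card_equiv_class_A1 (m j k s r₁ r₄ : ℤ)
    (hm : 0 ≤ m) (hk : 0 ≤ k) (hk3 : 3 * k ≤ m)
    (hjk : 2 * k ≤ j) (hjm : j ≤ m - k) (hs : 0 ≤ s) (hsk : s ≤ k)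
    (hdiv : j - 2 * k = r₁ + 3 * r₄) (hr₁ : 0 ≤ r₁) (hr₁' : r₁ ≤ 2)
    (hpos : 0 < 1 + r₄ + min 0 ((m + k - 2 * j).fdiv 3)) :
    ({r' : ℤ × ℤ × ℤ × ℤ | r' ∈ A1 m ∧
        ∃ ℓ : ℤ, r' - (r₁, k + r₄ - s, s, r₄) = ℓ • ((3, -1, 0, -1) : ℤ × ℤ × ℤ × ℤ)}.ncard : ℤ)
      = 1 + r₄ + min 0 ((m + k - 2 * j).fdiv 3) := by
  set t := (m + k - 2 * j).fdiv 3 with ht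
  have hte : t = (m + k - 2 * j) / 3 := Int.fdiv_eq_ediv_of_nonneg _ (by norm_num)
  have h1 : 3 * t + (m + k - 2 * j) % 3 = m + k - 2 * j := by
    rw [hte]; have := Int.mul_ediv_add_emod (m + k - 2 * j) 3; linarith
  have h2 : 0 ≤ (m + k - 2 * j) % 3 := Int.emod_nonneg _ (by norm_num)
  have h3 : (m + k - 2 * j) % 3 < 3 := Int.emod_lt_of_pos _ (by norm_num)
  set U := r₄ + min 0 t with hU
  have hU0 : 0 ≤ U := by omega
  have hset : {r' : ℤ × ℤ × ℤ × ℤ | r' ∈ A1 m ∧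
        ∃ ℓ : ℤ, r' - (r₁, k + r₄ - s, s, r₄) = ℓ • ((3, -1, 0, -1) : ℤ × ℤ × ℤ × ℤ)}
      = (fun ℓ : ℤ => (r₁ + 3 * ℓ, k + r₄ - s - ℓ, s, r₄ - ℓ)) '' Set.Icc 0 U := by
    ext ⟨a, b, c, d⟩
    simp only [Set.mem_setOf_eq, A1, Set.mem_image, Set.mem_Icc, Prod.mk_sub_mk,
      Prod.smul_mk, smul_eq_mul, Prod.mk.injEq]
    constructor
    · rintro ⟨⟨ha, hb, hc, hd, hdb, hsum⟩, ℓ, h₁, h₂, h₃, h₄⟩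
      exact ⟨ℓ, by omega, by omega⟩
    · rintro ⟨ℓ, ⟨hℓ0, hℓU⟩, h₁, h₂, h₃, h₄⟩
      refine ⟨⟨by omega, by omega, by omega, by omega, by omega, by omega⟩, ℓ, by push_cast; omega, by omega, by omega, by omega⟩
  rw [hset]
  have hinj : Function.Injective (fun ℓ : ℤ => ((r₁ + 3 * ℓ, k + r₄ - s - ℓ, s, r₄ - ℓ) : ℤ × ℤ × ℤ × ℤ)) := by
    intro x y hxy
    have := congrArg (fun p : ℤ × ℤ × ℤ × ℤ => p.2.2.2) hxy
    simp only at this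
    omega
  rw [Set.ncard_image_of_injective _ hinj, ← Finset.coe_Icc, Set.ncard_coe_finset,
    Int.card_Icc]
  omega
end

section
/- Let m ∈ ℤ≥0 and A₂ = { (r₁,r₂,r₃,r₄) ∈ ℤ≥0⁴ : r₃ ≤ r₁ and r₁ + r₂ + r₃ + r₄ ≤ m }. For j, k, s ∈ ℤ≥0 with j + k ≤ m and 0 ≤ s ≤ j, set r_{j,k,s} = (j−s, s, 0, m−j−k). Then: (a) r_{j,k,s} ∈ A₂; (b) the number of r' ∈ A₂ with r' − r_{j,k,s} ∈ ℤ·(1,0,1,−1) equals 1 + min(k, m−j−k). -/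
/-- `A₂ = { (r₁,r₂,r₃,r₄) ∈ ℤ≥0⁴ : r₃ ≤ r₁, r₁+r₂+r₃+r₄ ≤ m }`. -/
def A2 (m : ℤ) : Set (ℤ × ℤ × ℤ × ℤ) :=
  {r | 0 ≤ r.1 ∧ 0 ≤ r.2.1 ∧ 0 ≤ r.2.2.1 ∧ 0 ≤ r.2.2.2 ∧
       r.2.2.1 ≤ r.1 ∧ r.1 + r.2.1 + r.2.2.1 + r.2.2.2 ≤ m}

/-- For `j+k ≤ m` and `0 ≤ s ≤ j`, the tuple `r_{j,k,s} = (j−s, s, 0, m−j−k)` lies in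
`A₂`, and its equivalence class modulo translation by `(1,0,1,−1)` meets `A₂` in
exactly `1 + min(k, m−j−k)` points. -/
theorem rjks_mem_A2_and_card (m j k s : ℤ)
    (hm : 0 ≤ m) (hj : 0 ≤ j) (hk : 0 ≤ k) (hs : 0 ≤ s)
    (hjk : j + k ≤ m) (hsj : s ≤ j) :
    ((j - s, s, 0, m - j - k) : ℤ × ℤ × ℤ × ℤ) ∈ A2 m ∧
    ({r' : ℤ × ℤ × ℤ × ℤ | r' ∈ A2 m ∧
        ∃ ℓ : ℤ, r' - (j - s, s, 0, m - j - k) = ℓ • ((1, 0, 1, -1) : ℤ × ℤ × ℤ × ℤ)}.ncard : ℤ)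
      = 1 + min k (m - j - k) := by
  constructor
  · simp only [A2, Set.mem_setOf_eq]
    omega
  · set M := min k (m - j - k) with hM
    have hM0 : 0 ≤ M := by omega
    have hset : {r' : ℤ × ℤ × ℤ × ℤ | r' ∈ A2 m ∧
        ∃ ℓ : ℤ, r' - (j - s, s, 0, m - j - k) = ℓ • ((1, 0, 1, -1) : ℤ × ℤ × ℤ × ℤ)}
        = (fun ℓ : ℤ => ((j - s + ℓ, s, ℓ, m - j - k - ℓ) : ℤ × ℤ × ℤ × ℤ)) '' Set.Icc 0 M := by
      ext ⟨a, b, c, d⟩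
      simp only [Set.mem_setOf_eq, A2, Set.mem_image, Set.mem_Icc,
        Prod.ext_iff, Prod.smul_def, Prod.sub_def, smul_eq_mul]
      constructor
      · rintro ⟨⟨h1, h2, h3, h4, h5, h6⟩, ℓ, e1, e2, e3, e4⟩
        exact ⟨ℓ, by constructor <;> [skip; constructor] <;> simp at e1 e2 e3 e4 <;> omega⟩
      · rintro ⟨ℓ, ⟨hℓ0, hℓM⟩, e1, e2, e3, e4⟩
        refine ⟨⟨by omega, by omega, by omega, by omega, by omega, by omega⟩, ℓ, ?_⟩
        simp
        omega
    have hinj : Function.Injective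
        (fun ℓ : ℤ => ((j - s + ℓ, s, ℓ, m - j - k - ℓ) : ℤ × ℤ × ℤ × ℤ)) := by
      intro a b h
      simpa using congrArg (fun r : ℤ × ℤ × ℤ × ℤ => r.2.2.1) h
    rw [hset, Set.ncard_image_of_injective _ hinj, ← Finset.coe_Icc,
      Set.ncard_coe_finset, Int.card_Icc]
    omega
end

section
/- For the equivalence relation on ℤ⁴ given by r ∼ r' iff r − r' ∈ ℤ·(3,−1,0,−1), and A₁ = { r ∈ ℤ≥0⁴ : r₄ ≤ r₂, 2r₁+3r₂+3r₃ ≤ m }: every element of A₁ is equivalent to exactly one element of the family { (r₁, k+r₄−s, s, r₄) : 0 ≤ s ≤ k ≤ ⌊m/3⌋, 2k ≤ j ≤ m−k, where j−2k = r₁ + 3r₄ with 0 ≤ r₁ ≤ 2, and the count 1 + ⌊(j−2k)/3⌋ + min(0, ⌊(m+k−2j)/3⌋) is positive }. -/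
/-- The family `{ (r₁, k+r₄−s, s, r₄) }` indexed by `0 ≤ s ≤ k ≤ ⌊m/3⌋`,
`2k ≤ j ≤ m−k`, where `j−2k = r₁+3r₄` with `0 ≤ r₁ ≤ 2` and the count
`1 + ⌊(j−2k)/3⌋ + min(0, ⌊(m+k−2j)/3⌋)` is positive. -/
def repsA1 (m : ℤ) : Set (ℤ × ℤ × ℤ × ℤ) :=
  {r' | ∃ j k s r₁ r₄ : ℤ, 0 ≤ k ∧ 3 * k ≤ m ∧ 2 * k ≤ j ∧ j ≤ m - k ∧
        0 ≤ s ∧ s ≤ k ∧ j - 2 * k = r₁ + 3 * r₄ ∧ 0 ≤ r₁ ∧ r₁ ≤ 2 ∧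
        0 < 1 + r₄ + min 0 ((m + k - 2 * j).fdiv 3) ∧
        r' = (r₁, k + r₄ - s, s, r₄)}

/-- Every element of `A₁` is equivalent (modulo translation by `(3,−1,0,−1)`) to exactly
one element of the family of representatives. -/
theorem repsA1_complete (m : ℤ) (hm : 0 ≤ m) :
    ∀ r ∈ A1 m, ∃! r' : ℤ × ℤ × ℤ × ℤ,
      r' ∈ repsA1 m ∧ ∃ ℓ : ℤ, r - r' = ℓ • ((3, -1, 0, -1) : ℤ × ℤ × ℤ × ℤ) := by
  rintro ⟨r₁, r₂, r₃, r₄⟩ ⟨h1, h2, h3, h4, h5, h6⟩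
  simp only at h1 h2 h3 h4 h5 h6
  refine ⟨(r₁ % 3, r₂ + r₁ / 3, r₃, r₄ + r₁ / 3), ⟨?_, r₁ / 3, ?_⟩, ?_⟩
  · refine ⟨2 * (r₂ + r₃ - r₄) + r₁ + 3 * r₄, r₂ + r₃ - r₄, r₃, r₁ % 3, r₄ + r₁ / 3,
      by omega, by omega, by omega, by omega, by omega, by omega, by omega, by omega,
      by omega, ?_, by simp only [Prod.mk.injEq]; exact ⟨trivial, by ring, trivial⟩⟩
    rw [Int.fdiv_eq_ediv_of_nonneg _ (by norm_num)]
    omega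
  · simp only [Prod.smul_def, smul_eq_mul, Prod.mk_sub_mk, Prod.mk.injEq]
    refine ⟨by omega, by omega, by omega, by omega⟩
  · rintro ⟨a, b, c, d⟩ ⟨⟨j, k, s, x₁, x₄, hk0, hk3, hj1, hj2, hs0, hsk, heq, hx0, hx2,
      hpos, hr'⟩, ℓ, hl⟩
    simp only [Prod.mk.injEq] at hr'
    obtain ⟨e1, e2, e3, e4⟩ := hr'
    subst e1 e2 e3 e4
    simp only [Prod.smul_def, smul_eq_mul, Prod.mk_sub_mk, Prod.mk.injEq] at hl ⊢
    obtain ⟨f1, f2, f3, f4⟩ := hl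
    refine ⟨by omega, by omega, by omega, by omega⟩
end
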